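/- arXiv:2404.10778 — 14 statements merged into one kernel-verified Lean document; each statement's English description precedes it below -/
import Mathlib

section
/- Let f be a polynomial over ℤ/2 in n variables with total degree at most n. Then the coefficient of the monomial x₁x₂⋯xₙ in f equals the sum of f(α) over all α ∈ (ℤ/2)^n. -/
theorem stmt_2 (n : ℕ) (f : MvPolynomial (Fin n) (ZMod 2))
    (hdeg : f.totalDegree ≤ n) :
    f.coeff (Finsupp.equivFunOnFinite.symm fun _ : Fin n => 1) =
      ∑ α : Fin n → ZMod 2, MvPolynomial.eval α f := by
  classical
  set d₀ : Fin n →₀ ℕ := Finsupp.equivFunOnFinite.symm fun _ : Fin n => 1 with hd₀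
  have hd₀i : ∀ i, d₀ i = 1 := fun i => rfl
  have h2 : ∀ m : ℕ, (∑ a : ZMod 2, a ^ m) = if m ≠ 0 then 1 else 0 := by
    intro m
    cases m with
    | zero => simp; decide
    | succ k =>
      rw [show (Finset.univ : Finset (ZMod 2)) = {0, 1} from by decide]
      simp [zero_pow]
  have key : ∀ d : Fin n →₀ ℕ, (∑ α : Fin n → ZMod 2, ∏ i, α i ^ d i) =
      if ∀ i, d i ≠ 0 then 1 else 0 := by
    intro d
    rw [← Fintype.prod_sum (fun i (a : ZMod 2) => a ^ d i)]
    simp only [h2]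
    rw [Finset.prod_boole]
    simp
  symm
  calc
    ∑ α : Fin n → ZMod 2, MvPolynomial.eval α f
        = ∑ α : Fin n → ZMod 2, ∑ d ∈ f.support, f.coeff d * ∏ i, α i ^ d i := by
          simp only [MvPolynomial.eval_eq']
    _ = ∑ d ∈ f.support, ∑ α : Fin n → ZMod 2, f.coeff d * ∏ i, α i ^ d i :=
          Finset.sum_comm
    _ = ∑ d ∈ f.support, f.coeff d * (if ∀ i, d i ≠ 0 then 1 else 0) := by
          simp only [← Finset.mul_sum, key]
    _ = ∑ d ∈ f.support, (if d = d₀ then f.coeff d else 0) := by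
          apply Finset.sum_congr rfl
          intro d hd
          by_cases h : ∀ i, d i ≠ 0
          · have hsup : d.support = Finset.univ := by
              ext i; simp [Finsupp.mem_support_iff, h i]
            have hsum : ∑ i, d i ≤ n := by
              calc ∑ i, d i = d.sum fun _ e => e := by
                    rw [Finsupp.sum, hsup]
                _ ≤ f.totalDegree := MvPolynomial.le_totalDegree hd
                _ ≤ n := hdeg
            have hone : ∀ i, 1 ≤ d i := fun i => Nat.one_le_iff_ne_zero.mpr (h i)
            have hn : n ≤ ∑ i, d i := by
              calc n = ∑ _i : Fin n, 1 := by simp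
                _ ≤ ∑ i, d i := Finset.sum_le_sum fun i _ => hone i
            have heq : ∀ i ∈ (Finset.univ : Finset (Fin n)), 1 = d i :=
              (Finset.sum_eq_sum_iff_of_le (fun i _ => hone i)).mp
                (by rw [Finset.sum_const, smul_eq_mul, mul_one, Finset.card_univ,
                      Fintype.card_fin]; omega)
            have : d = d₀ := by
              ext i; rw [← heq i (Finset.mem_univ i), hd₀i i]
            rw [this, if_pos rfl, if_pos (fun i => by rw [hd₀i i]; exact one_ne_zero), mul_one]
          · have : ¬ d = d₀ := by
              rintro rfl; exact h fun i => by simp [hd₀i i]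
            simp [h, this]
    _ = if d₀ ∈ f.support then f.coeff d₀ else 0 := Finset.sum_ite_eq' _ _ _
    _ = f.coeff d₀ := by
          by_cases h : d₀ ∈ f.support
          · simp [h]
          · simp [h, MvPolynomial.notMem_support_iff.mp h]
end

section
/- Let f be a polynomial over ℤ/2 in n variables with total degree at most n. If f vanishes at every point of (ℤ/2)^n, then the coefficient of the monomial x₁x₂⋯xₙ in f is zero. -/
theorem stmt_3 (n : ℕ) (f : MvPolynomial (Fin n) (ZMod 2))
    (hdeg : f.totalDegree ≤ n)
    (hvanish : ∀ α : Fin n → ZMod 2, MvPolynomial.eval α f = 0) :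
    f.coeff (Finsupp.equivFunOnFinite.symm fun _ : Fin n => 1) = 0 := by
  classical
  set d₁ : (Fin n) →₀ ℕ := Finsupp.equivFunOnFinite.symm (fun _ : Fin n => 1) with hd₁def
  have hd₁ : ∀ i, d₁ i = 1 := fun i => rfl
  have key : (∑ x : Fin n → ZMod 2, MvPolynomial.eval x f) = f.coeff d₁ := by
    calc ∑ x : Fin n → ZMod 2, MvPolynomial.eval x f
        = ∑ x : Fin n → ZMod 2, ∑ d ∈ f.support, f.coeff d * ∏ i, x i ^ d i := by
          simp only [MvPolynomial.eval_eq']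
      _ = ∑ d ∈ f.support, ∑ x : Fin n → ZMod 2, f.coeff d * ∏ i, x i ^ d i :=
          Finset.sum_comm
      _ = ∑ d ∈ f.support, f.coeff d * ∏ i, (∑ a : ZMod 2, a ^ d i) := by
          refine Finset.sum_congr rfl fun d _ => ?_
          rw [← Finset.mul_sum]
          congr 1
          rw [Finset.prod_univ_sum]
          rw [Fintype.piFinset_univ]
      _ = f.coeff d₁ := ?_
    rw [Finset.sum_eq_single d₁]
    · have : ∀ i : Fin n, (∑ a : ZMod 2, a ^ d₁ i) = 1 := by
        intro i; rw [hd₁]; decide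
      simp [this]
    · intro d hd hne
      -- d ∈ support, d ≠ d₁; show term = 0
      have hsum : ∑ i, d i ≤ n := by
        calc ∑ i, d i = d.sum fun _ e => e := by
              rw [Finsupp.sum_fintype]; intro; rfl
          _ ≤ f.totalDegree := MvPolynomial.le_totalDegree hd
          _ ≤ n := hdeg
      -- there exists i with d i = 0
      have : ∃ i, d i = 0 := by
        by_contra h
        push_neg at h
        have hall : ∀ i, 1 ≤ d i := fun i => Nat.one_le_iff_ne_zero.mpr (h i)
        have hge : n ≤ ∑ i, d i := by
          calc n = ∑ _i : Fin n, 1 := by simp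
            _ ≤ ∑ i, d i := Finset.sum_le_sum fun i _ => hall i
        have heq : ∀ i ∈ Finset.univ, d i = 1 := by
          have := Nat.le_antisymm hsum hge
          intro i hi
          by_contra hne1
          have hi1 := hall i
          have h2 : 2 ≤ d i := by omega
          have hcard : (Finset.univ.erase i).card = n - 1 := by simp
          have h1 : ∑ j ∈ Finset.univ.erase i, 1 ≤ ∑ j ∈ Finset.univ.erase i, d j :=
            Finset.sum_le_sum fun j _ => hall j
          have h3 : ∑ j ∈ Finset.univ.erase i, d j + d i = ∑ j, d j :=
            Finset.sum_erase_add _ _ (Finset.mem_univ i)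
          have hn : 1 ≤ n := i.2.trans_le (le_refl n) |>.le.trans (le_refl n) |> fun _ => Nat.one_le_iff_ne_zero.mpr (by rintro rfl; exact i.elim0)
          rw [Finset.sum_const, smul_eq_mul, mul_one, hcard] at h1
          omega
        apply hne
        ext i
        rw [hd₁]; exact heq i (Finset.mem_univ i)
      obtain ⟨i, hi⟩ := this
      have : (∑ a : ZMod 2, a ^ d i) = 0 := by rw [hi]; decide
      rw [Finset.prod_eq_zero (Finset.mem_univ i) this, mul_zero]
    · intro h
      rw [MvPolynomial.notMem_support_iff.mp h, zero_mul]
  rw [← key]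
  simp [hvanish]
end

section
/- Let p be prime and let f be a polynomial over ℤ/p in n variables with total degree less than n(p−1). If f is nonzero at some point of (ℤ/p)^n, then f is nonzero at at least two distinct points of (ℤ/p)^n. -/
theorem stmt_5 (p n : ℕ) (hp : p.Prime) (f : MvPolynomial (Fin n) (ZMod p))
    (hdeg : f.totalDegree < n * (p - 1))
    (hne : ∃ α : Fin n → ZMod p, MvPolynomial.eval α f ≠ 0) :
    ∃ α β : Fin n → ZMod p, α ≠ β ∧
      MvPolynomial.eval α f ≠ 0 ∧ MvPolynomial.eval β f ≠ 0 := by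
  haveI : Fact p.Prime := ⟨hp⟩
  obtain ⟨α, hα⟩ := hne
  have hsum : ∑ x : Fin n → ZMod p, MvPolynomial.eval x f = 0 := by
    apply MvPolynomial.sum_eval_eq_zero
    simpa [ZMod.card, Fintype.card_fin, Nat.mul_comm] using hdeg
  by_contra h
  push_neg at h
  have hz : ∀ β : Fin n → ZMod p, β ≠ α → MvPolynomial.eval β f = 0 := by
    intro β hβ
    by_contra hβ0
    exact hβ0 (h α β (Ne.symm hβ) hα)
  have : ∑ x : Fin n → ZMod p, MvPolynomial.eval x f = MvPolynomial.eval α f := by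
    rw [Finset.sum_eq_single α]
    · intro b _ hb; exact hz b hb
    · intro hα'; exact absurd (Finset.mem_univ α) hα'
  exact hα (this ▸ hsum)
end

section
/- Let p be prime and let f be a polynomial over ℤ/p in n variables with total degree at most n(p−1). Then the coefficient of the monomial x₁^{p−1}⋯xₙ^{p−1} in f equals (−1)^n times the sum of f(α) over all α ∈ (ℤ/p)^n. -/
open Finset MvPolynomial

lemma sum_pow_card_sub_one (p : ℕ) [Fact p.Prime] :
    ∑ x : ZMod p, x ^ (p - 1) = -1 := by
  classical
  have hp : 1 < p := (Fact.out : p.Prime).one_lt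
  have hq : Fintype.card (ZMod p) = p := ZMod.card p
  have h0 : (0 : ℕ) < p - 1 := by omega
  have key := FiniteField.sum_pow_units (ZMod p) (p - 1)
  rw [hq, if_pos dvd_rfl] at key
  rw [← key]
  let φ : (ZMod p)ˣ ↪ ZMod p := ⟨fun x ↦ x, fun _ _ => Units.ext⟩
  have huniv : univ.map φ = univ \ {0} := by
    ext x
    have hx : (∃ a : (ZMod p)ˣ, (a : ZMod p) = x) ↔ x ≠ 0 := isUnit_iff_ne_zero
    simp only [mem_map, mem_univ, Function.Embedding.coeFn_mk, true_and, mem_sdiff,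
      mem_singleton, φ]
    exact hx
  calc
    ∑ x : ZMod p, x ^ (p - 1) = ∑ x ∈ univ \ {(0 : ZMod p)}, x ^ (p - 1) := by
      rw [← Finset.sum_sdiff ({0} : Finset (ZMod p)).subset_univ, Finset.sum_singleton,
        zero_pow (by omega), add_zero]
    _ = ∑ x : (ZMod p)ˣ, (x : ZMod p) ^ (p - 1) := by
      rw [← huniv, Finset.sum_map]; rfl

theorem stmt_6 (p n : ℕ) [Fact p.Prime] (f : MvPolynomial (Fin n) (ZMod p))
    (hdeg : f.totalDegree ≤ n * (p - 1)) :
    f.coeff (Finsupp.equivFunOnFinite.symm fun _ : Fin n => p - 1) =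
      (-1) ^ n * ∑ α : Fin n → ZMod p, MvPolynomial.eval α f := by
  classical
  set t : Fin n →₀ ℕ := Finsupp.equivFunOnFinite.symm fun _ : Fin n => p - 1 with ht
  have htapp : ∀ i, t i = p - 1 := fun i => rfl
  have key : ∑ α : Fin n → ZMod p, MvPolynomial.eval α f = (-1) ^ n * f.coeff t := by
    calc
      ∑ α : Fin n → ZMod p, MvPolynomial.eval α f
          = ∑ α : Fin n → ZMod p, ∑ d ∈ f.support, f.coeff d * ∏ i, α i ^ d i := by
            simp only [eval_eq']
      _ = ∑ d ∈ f.support, ∑ α : Fin n → ZMod p, f.coeff d * ∏ i, α i ^ d i := Finset.sum_comm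
      _ = ∑ d ∈ f.support, f.coeff d * ∏ i, ∑ x : ZMod p, x ^ d i := by
            refine Finset.sum_congr rfl fun d _ => ?_
            rw [← Finset.mul_sum]
            congr 1
            rw [← Finset.sum_prod_piFinset Finset.univ (fun i x => x ^ d i), Fintype.piFinset_univ]
      _ = (-1) ^ n * f.coeff t := ?_
    rw [Finset.sum_eq_single t]
    · rw [Finset.prod_congr rfl fun i _ => by rw [htapp i], Finset.prod_const,
        sum_pow_card_sub_one, Finset.card_univ, Fintype.card_fin, mul_comm]
    · intro d hd hne
      -- some coordinate of d is < p - 1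
      have hlt : ∃ i, d i < p - 1 := by
        by_contra h
        push_neg at h
        apply hne
        have hge : ∀ i, p - 1 ≤ d i := h
        have hsum : ∑ i, d i ≤ n * (p - 1) := by
          calc ∑ i, d i = d.sum fun _ e => e := by
                rw [Finsupp.sum_fintype]; intro; rfl
            _ ≤ f.totalDegree := MvPolynomial.le_totalDegree hd
            _ ≤ n * (p - 1) := hdeg
        have heq : ∀ i, d i = p - 1 := by
          by_contra hc
          push_neg at hc
          obtain ⟨j, hj⟩ := hc
          have : n * (p - 1) < ∑ i, d i := by
            calc n * (p - 1) = ∑ _i : Fin n, (p - 1) := by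
                  simp [Finset.sum_const, Fintype.card_fin]
              _ < ∑ i, d i := by
                  refine Finset.sum_lt_sum (fun i _ => hge i) ⟨j, Finset.mem_univ j, ?_⟩
                  exact lt_of_le_of_ne (hge j) (Ne.symm hj)
          omega
        ext i
        rw [heq i, htapp i]
      obtain ⟨i, hi⟩ := hlt
      have : ∏ j, ∑ x : ZMod p, x ^ d j = 0 := by
        apply Finset.prod_eq_zero (Finset.mem_univ i)
        have := FiniteField.sum_pow_lt_card_sub_one (ZMod p) (d i) (by rwa [ZMod.card])
        exact this
      rw [this, mul_zero]
    · intro h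
      rw [MvPolynomial.notMem_support_iff.mp h, zero_mul]
  rw [key, ← mul_assoc, ← pow_add, Even.neg_one_pow ⟨n, by ring⟩, one_mul]
end

section
/- Let p be prime and let f be a polynomial over ℤ/p in n variables with total degree at most n(p−1). If f vanishes at every point of (ℤ/p)^n, then the coefficient of x₁^{p−1}⋯xₙ^{p−1} in f is zero. -/
open Finset MvPolynomial

theorem stmt_7 (p n : ℕ) (hp : p.Prime) (f : MvPolynomial (Fin n) (ZMod p))
    (hdeg : f.totalDegree ≤ n * (p - 1))
    (hvanish : ∀ α : Fin n → ZMod p, MvPolynomial.eval α f = 0) :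
    f.coeff (Finsupp.equivFunOnFinite.symm fun _ : Fin n => p - 1) = 0 := by
  haveI : Fact p.Prime := ⟨hp⟩
  set K := ZMod p
  have hq : Fintype.card K = p := ZMod.card p
  have hp2 : 2 ≤ p := hp.two_le
  set D : Fin n →₀ ℕ := Finsupp.equivFunOnFinite.symm fun _ : Fin n => p - 1 with hD
  have hDi : ∀ i, D i = p - 1 := fun i => rfl
  -- sum of a^(p-1) over K is -1
  have hsum_top : ∑ a : K, a ^ (p - 1) = -1 := by
    have h0 : (0 : K) ^ (p - 1) = 0 := by
      apply zero_pow; omega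
    rw [← Finset.add_sum_erase _ _ (Finset.mem_univ (0 : K)), h0, zero_add]
    have : ∑ a ∈ Finset.univ.erase (0 : K), a ^ (p - 1)
        = ∑ a ∈ Finset.univ.erase (0 : K), (1 : K) := by
      apply Finset.sum_congr rfl
      intro a ha
      have ha0 : a ≠ 0 := Finset.ne_of_mem_erase ha
      rw [ZMod.pow_card_sub_one_eq_one ha0]
    rw [this, Finset.sum_const, Finset.card_erase_of_mem (Finset.mem_univ _),
      Finset.card_univ, hq, nsmul_eq_mul, mul_one]
    have : ((p : K) - 1) = -1 := by
      rw [ZMod.natCast_self]; ring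
    rw [← this]
    push_cast [Nat.cast_sub (by omega : 1 ≤ p)]
    exact (Nat.cast_sub (R := K) (by omega : 1 ≤ p)).trans (congrArg _ (Nat.cast_one (R := K)))
  have hsum_lt : ∀ k : ℕ, k < p - 1 → ∑ a : K, a ^ k = 0 := by
    intro k hk
    have := FiniteField.sum_pow_lt_card_sub_one K k (by rw [hq]; exact hk)
    exact this
  -- main computation
  have hfactor : ∀ d : Fin n →₀ ℕ,
      ∑ x : Fin n → K, ∏ i, x i ^ d i = ∏ i, ∑ a : K, a ^ d i := by
    intro d
    rw [← Fintype.piFinset_univ]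
    exact Finset.sum_prod_piFinset Finset.univ (fun i a => a ^ d i)
  have hmain : ∑ x : Fin n → K, MvPolynomial.eval x f
      = ∑ d ∈ f.support, f.coeff d * ∏ i, ∑ a : K, a ^ d i := by
    simp only [eval_eq']
    rw [Finset.sum_comm]
    refine Finset.sum_congr rfl fun d _ => ?_
    rw [← Finset.mul_sum, hfactor d]
  have hzero : ∀ d ∈ f.support, d ≠ D → f.coeff d * ∏ i, ∑ a : K, a ^ d i = 0 := by
    intro d hd hdD
    rcases Classical.em (∃ i, d i < p - 1) with ⟨i, hi⟩ | hno
    · rw [Finset.prod_eq_zero (Finset.mem_univ i) (hsum_lt _ hi), mul_zero]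
    · push_neg at hno
      exfalso
      -- all d i ≥ p - 1; total degree ≤ n (p-1) forces all equal, contradiction
      apply hdD
      have hsum_le : ∑ i, d i ≤ n * (p - 1) := by
        calc ∑ i, d i = d.sum fun _ e => e := by
              rw [Finsupp.sum_fintype]; intro; rfl
          _ ≤ f.totalDegree := MvPolynomial.le_totalDegree hd
          _ ≤ n * (p - 1) := hdeg
      have hge : n * (p - 1) ≤ ∑ i, d i := by
        calc n * (p - 1) = ∑ _i : Fin n, (p - 1) := by
              rw [Finset.sum_const, Finset.card_univ, Fintype.card_fin, smul_eq_mul]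
          _ ≤ ∑ i, d i := Finset.sum_le_sum fun i _ => hno i
      have heq : ∀ i, d i = p - 1 := by
        by_contra hcon
        push_neg at hcon
        obtain ⟨j, hj⟩ := hcon
        have hjgt : p - 1 < d j := lt_of_le_of_ne (hno j) (Ne.symm hj)
        have : ∑ i, d i > n * (p - 1) := by
          calc n * (p - 1) = ∑ _i : Fin n, (p - 1) := by
                rw [Finset.sum_const, Finset.card_univ, Fintype.card_fin, smul_eq_mul]
            _ < ∑ i, d i := by
                apply Finset.sum_lt_sum (fun i _ => hno i) ⟨j, Finset.mem_univ j, hjgt⟩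
        omega
      ext i
      rw [heq i, hDi i]
  have htotal : ∑ x : Fin n → K, MvPolynomial.eval x f = f.coeff D * (-1 : K) ^ n := by
    rw [hmain]
    rcases Classical.em (D ∈ f.support) with hDs | hDs
    · rw [Finset.sum_eq_single D hzero (fun h => absurd hDs h)]
      congr 1
      rw [Finset.prod_congr rfl fun i _ => by rw [hDi i, hsum_top]]
      simp
    · rw [Finset.sum_eq_zero (fun d hd => hzero d hd (fun h => hDs (h ▸ hd)))]
      rw [MvPolynomial.notMem_support_iff.mp hDs, zero_mul]
  have hvz : ∑ x : Fin n → K, MvPolynomial.eval x f = 0 :=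
    Finset.sum_eq_zero fun x _ => hvanish x
  rw [hvz] at htotal
  have hu : IsUnit ((-1 : K) ^ n) := (IsUnit.neg isUnit_one).pow n
  have := htotal.symm
  rcases mul_eq_zero.mp this with h | h
  · exact h
  · exact absurd h hu.ne_zero
end

section
/- (Chevalley's theorem) Let p be prime and let f₁,…,f_k be polynomials over ℤ/p in n variables whose total degrees sum to less than n. If they have a common root in (ℤ/p)^n, then they have at least two distinct common roots in (ℤ/p)^n. -/
set_option maxHeartbeats 1000000 in

theorem stmt_8 (p n k : ℕ) (hp : p.Prime) (f : Fin k → MvPolynomial (Fin n) (ZMod p))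
    (hdeg : ∑ i, (f i).totalDegree < n)
    (hroot : ∃ α : Fin n → ZMod p, ∀ i, MvPolynomial.eval α (f i) = 0) :
    ∃ α β : Fin n → ZMod p, α ≠ β ∧
      (∀ i, MvPolynomial.eval α (f i) = 0) ∧ (∀ i, MvPolynomial.eval β (f i) = 0) := by
  classical
  haveI : Fact p.Prime := ⟨hp⟩
  obtain ⟨α, hα⟩ := hroot
  have hdeg' : ∑ i, (f i).totalDegree < Fintype.card (Fin n) := by simpa using hdeg
  have hdvd : p ∣ Fintype.card { x : Fin n → ZMod p // ∀ i, MvPolynomial.eval x (f i) = 0 } :=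
by convert char_dvd_card_solutions_of_fintype_sum_lt p hdeg'
  have hpos : 0 < Fintype.card { x : Fin n → ZMod p // ∀ i, MvPolynomial.eval x (f i) = 0 } :=
    Fintype.card_pos_iff.mpr ⟨⟨α, hα⟩⟩
  have h2 : 1 < Fintype.card { x : Fin n → ZMod p // ∀ i, MvPolynomial.eval x (f i) = 0 } :=
    lt_of_lt_of_le hp.one_lt (Nat.le_of_dvd hpos hdvd)
  obtain ⟨⟨a, ha⟩, ⟨b, hb⟩, hab⟩ := Fintype.exists_pair_of_one_lt_card h2
  exact ⟨a, b, fun h => hab (by simp [Subtype.ext_iff, h]), ha, hb⟩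
end

section
/- Let F be a field, let A₁,…,Aₙ ⊆ F be two-element subsets with A_i = {a_{i0}, a_{i1}}, and let f be a polynomial over F in n variables with total degree less than n. Then ∑_{α ∈ {0,1}^n} (−1)^{α(1)+⋯+α(n)} f(a_{1,α(1)}, …, a_{n,α(n)}) = 0. -/
theorem stmt_9 (F : Type*) [Field F] (n : ℕ) (a : Fin n → Fin 2 → F)
    (ha : ∀ i, a i 0 ≠ a i 1) (f : MvPolynomial (Fin n) F)
    (hdeg : f.totalDegree < n) :
    ∑ α : Fin n → Fin 2, (-1 : F) ^ (∑ i, (α i : ℕ)) *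
      MvPolynomial.eval (fun i => a i (α i)) f = 0 := by
  have key : ∀ d ∈ f.support,
      ∑ α : Fin n → Fin 2, (-1:F) ^ (∑ i, (α i : ℕ)) * ∏ i, a i (α i) ^ d i = 0 := by
    intro d hd
    have hfac : ∑ α : Fin n → Fin 2, (-1:F) ^ (∑ i, (α i : ℕ)) * ∏ i, a i (α i) ^ d i
        = ∏ i, ∑ j : Fin 2, (-1:F) ^ (j:ℕ) * a i j ^ d i := by
      rw [Finset.prod_univ_sum]
      rw [Fintype.piFinset_univ]
      refine Finset.sum_congr rfl fun α _ => ?_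
      rw [Finset.prod_mul_distrib, Finset.prod_pow_eq_pow_sum]
    rw [hfac]
    -- some coordinate has d i = 0
    have hex : ∃ i, d i = 0 := by
      by_contra h
      push_neg at h
      have h1 : ∀ i ∈ (Finset.univ : Finset (Fin n)), 1 ≤ d i := fun i _ =>
        Nat.one_le_iff_ne_zero.2 (h i)
      have : n ≤ ∑ i, d i := by
        calc n = ∑ _i : Fin n, 1 := by simp
        _ ≤ ∑ i, d i := Finset.sum_le_sum h1
      have h2 : ∑ i, d i ≤ f.totalDegree := by
        have := MvPolynomial.le_totalDegree hd
        rwa [Finsupp.sum_fintype] at this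
        intro; rfl
      omega
    obtain ⟨i, hi⟩ := hex
    refine Finset.prod_eq_zero (Finset.mem_univ i) ?_
    rw [hi]
    simp [Fin.sum_univ_two]
  have heval : ∀ α : Fin n → Fin 2,
      MvPolynomial.eval (fun i => a i (α i)) f
        = ∑ d ∈ f.support, f.coeff d * ∏ i, a i (α i) ^ d i := by
    intro α
    exact MvPolynomial.eval_eq' _ _
  calc ∑ α : Fin n → Fin 2, (-1 : F) ^ (∑ i, (α i : ℕ)) *
      MvPolynomial.eval (fun i => a i (α i)) f
      = ∑ α : Fin n → Fin 2, ∑ d ∈ f.support,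
          f.coeff d * ((-1:F) ^ (∑ i, (α i : ℕ)) * ∏ i, a i (α i) ^ d i) := by
        refine Finset.sum_congr rfl fun α _ => ?_
        rw [heval α, Finset.mul_sum]
        refine Finset.sum_congr rfl fun d _ => ?_
        ring
    _ = ∑ d ∈ f.support, f.coeff d *
          ∑ α : Fin n → Fin 2, (-1:F) ^ (∑ i, (α i : ℕ)) * ∏ i, a i (α i) ^ d i := by
        rw [Finset.sum_comm]
        simp [Finset.mul_sum]
    _ = 0 := by
        refine Finset.sum_eq_zero fun d hd => ?_
        rw [key d hd, mul_zero]
end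

section
/- Let F be a field, let A₁,…,Aₙ ⊆ F be two-element subsets, and let f be a polynomial over F in n variables with total degree less than n. If f is nonzero at some point of A₁×⋯×Aₙ, then f is nonzero at at least two distinct points of A₁×⋯×Aₙ. -/
theorem stmt_10 (F : Type*) [Field F] (n : ℕ) (A : Fin n → Finset F)
    (hA : ∀ i, (A i).card = 2) (f : MvPolynomial (Fin n) F)
    (hdeg : f.totalDegree < n)
    (hne : ∃ α : Fin n → F, (∀ i, α i ∈ A i) ∧ MvPolynomial.eval α f ≠ 0) :
    ∃ α β : Fin n → F, α ≠ β ∧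
      (∀ i, α i ∈ A i) ∧ (∀ i, β i ∈ A i) ∧
      MvPolynomial.eval α f ≠ 0 ∧ MvPolynomial.eval β f ≠ 0 := by
  classical
  by_contra hcon
  push_neg at hcon
  obtain ⟨α, hαA, hαf⟩ := hne
  have hvan : ∀ x : Fin n → F, (∀ i, x i ∈ A i) → x ≠ α → MvPolynomial.eval x f = 0 := by
    intro x hx hxne
    by_contra hxf
    exact hαf (hcon x α hxne hx hαA hxf)
  choose a b hab hAeq using fun i => Finset.card_eq_two.mp (hA i)
  set w : Fin n → F → F := fun i x => if x = a i then (a i - b i)⁻¹ else (b i - a i)⁻¹ with hw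
  have hsub : ∀ i, a i - b i ≠ 0 := fun i => sub_ne_zero.mpr (hab i)
  have hwne : ∀ i t, w i t ≠ 0 := by
    intro i t
    simp only [hw]
    split
    · exact inv_ne_zero (hsub i)
    · exact inv_ne_zero (sub_ne_zero.mpr (Ne.symm (hab i)))
  have hkey : ∀ i, ∑ t ∈ A i, w i t = 0 := by
    intro i
    rw [hAeq i, Finset.sum_insert (by simp [hab i]), Finset.sum_singleton]
    simp only [hw]
    rw [if_pos trivial, if_neg (Ne.symm (hab i)), ← neg_sub (a i) (b i), inv_neg]
    ring
  have hS : ∑ x ∈ Fintype.piFinset A, (∏ i, w i (x i)) * MvPolynomial.eval x f = 0 := by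
    have hterm : ∀ x : Fin n → F, (∏ i, w i (x i)) * MvPolynomial.eval x f
        = ∑ d ∈ f.support, MvPolynomial.coeff d f * ∏ i, (w i (x i) * (x i) ^ d i) := by
      intro x
      rw [MvPolynomial.eval_eq', Finset.mul_sum]
      refine Finset.sum_congr rfl fun d _ => ?_
      rw [Finset.prod_mul_distrib]
      ring
    simp_rw [hterm]
    rw [Finset.sum_comm]
    refine Finset.sum_eq_zero fun d hd => ?_
    rw [← Finset.mul_sum, ← Finset.prod_univ_sum A (fun i t => w i t * t ^ d i)]
    obtain ⟨i, hi⟩ : ∃ i, d i = 0 := by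
      by_contra hall
      push_neg at hall
      have h1 : n ≤ ∑ i, d i := by
        calc n = ∑ _i : Fin n, 1 := by simp
        _ ≤ ∑ i, d i := Finset.sum_le_sum fun i _ => Nat.one_le_iff_ne_zero.mpr (hall i)
      have h2 : ∑ i, d i ≤ f.totalDegree := by
        have h3 := MvPolynomial.le_totalDegree hd
        rwa [Finsupp.sum_fintype _ _ (fun _ => rfl)] at h3
      omega
    have hz : (∑ t ∈ A i, w i t * t ^ d i) = 0 := by
      rw [hi]
      simpa using hkey i
    rw [Finset.prod_eq_zero (Finset.mem_univ i) hz, mul_zero]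
  have hαmem : α ∈ Fintype.piFinset A := by
    simpa [Fintype.mem_piFinset] using hαA
  rw [Finset.sum_eq_single_of_mem α hαmem (fun x hx hxα => by
    rw [hvan x (by simpa [Fintype.mem_piFinset] using hx) hxα, mul_zero])] at hS
  exact (mul_ne_zero (Finset.prod_ne_zero_iff.mpr fun i _ => hwne i _) hαf) hS
end

section
/- Let F be a field, let A₁,…,Aₙ ⊆ F be two-element subsets with A_i = {a_{i0}, a_{i1}}, and let f be a polynomial over F in n variables with total degree at most n. Then the coefficient of x₁⋯xₙ in f equals [∑_{α ∈ {0,1}^n} (−1)^{α(1)+⋯+α(n)} f(a_{1,α(1)}, …, a_{n,α(n)})] divided by ∏_{i=1}^n (a_{i0} − a_{i1}). -/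
theorem stmt_11 (F : Type*) [Field F] (n : ℕ) (a : Fin n → Fin 2 → F)
    (ha : ∀ i, a i 0 ≠ a i 1) (f : MvPolynomial (Fin n) F)
    (hdeg : f.totalDegree ≤ n) :
    f.coeff (Finsupp.equivFunOnFinite.symm fun _ : Fin n => 1) =
      (∑ α : Fin n → Fin 2, (-1 : F) ^ (∑ i, (α i : ℕ)) *
        MvPolynomial.eval (fun i => a i (α i)) f) / ∏ i, (a i 0 - a i 1) := by
  have hprod : (∏ i, (a i 0 - a i 1)) ≠ 0 :=
    Finset.prod_ne_zero_iff.mpr fun i _ => sub_ne_zero.mpr (ha i)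
  set m : Fin n →₀ ℕ := Finsupp.equivFunOnFinite.symm fun _ : Fin n => 1 with hm
  have hmi : ∀ i, m i = 1 := fun i => rfl
  rw [eq_div_iff hprod]
  -- key factorization for a fixed exponent vector d
  have key : ∀ d : Fin n →₀ ℕ,
      (∑ α : Fin n → Fin 2, (-1 : F) ^ (∑ i, (α i : ℕ)) * ∏ i, a i (α i) ^ d i)
        = ∏ i, (a i 0 ^ d i - a i 1 ^ d i) := by
    intro d
    have h1 : ∀ α : Fin n → Fin 2,
        (-1 : F) ^ (∑ i, (α i : ℕ)) * ∏ i, a i (α i) ^ d i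
          = ∏ i, ((-1 : F) ^ (α i : ℕ) * a i (α i) ^ d i) := by
      intro α
      rw [Finset.prod_mul_distrib, Finset.prod_pow_eq_pow_sum]
    simp_rw [h1]
    symm
    calc (∏ i, (a i 0 ^ d i - a i 1 ^ d i))
        = ∏ i, ∑ j : Fin 2, (-1 : F) ^ (j : ℕ) * a i j ^ d i := by
          refine Finset.prod_congr rfl fun i _ => ?_
          simp [Fin.sum_univ_two, sub_eq_add_neg]
      _ = ∑ α ∈ Fintype.piFinset (fun _ : Fin n => (Finset.univ : Finset (Fin 2))),
            ∏ i, (-1 : F) ^ (α i : ℕ) * a i (α i) ^ d i :=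
          Finset.prod_univ_sum _ _
      _ = ∑ α : Fin n → Fin 2, ∏ i, (-1 : F) ^ (α i : ℕ) * a i (α i) ^ d i := by
          rw [Fintype.piFinset_univ]
  symm
  calc (∑ α : Fin n → Fin 2, (-1 : F) ^ (∑ i, (α i : ℕ)) *
        MvPolynomial.eval (fun i => a i (α i)) f)
      = ∑ α : Fin n → Fin 2, ∑ d ∈ f.support,
          f.coeff d * ((-1 : F) ^ (∑ i, (α i : ℕ)) * ∏ i, a i (α i) ^ d i) := by
        refine Finset.sum_congr rfl fun α _ => ?_
        rw [MvPolynomial.eval_eq', Finset.mul_sum]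
        refine Finset.sum_congr rfl fun d _ => ?_
        ring
    _ = ∑ d ∈ f.support, f.coeff d *
          (∑ α : Fin n → Fin 2, (-1 : F) ^ (∑ i, (α i : ℕ)) * ∏ i, a i (α i) ^ d i) := by
        rw [Finset.sum_comm]
        simp_rw [Finset.mul_sum]
    _ = ∑ d ∈ f.support, f.coeff d * ∏ i, (a i 0 ^ d i - a i 1 ^ d i) := by
        simp_rw [key]
    _ = f.coeff m * ∏ i, (a i 0 - a i 1) := by
        rw [Finset.sum_eq_single m]
        · simp [hmi]
        · intro d hd hne
          -- some coordinate of d is zero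
          have hzero : ∃ i, d i = 0 := by
            by_contra h
            push_neg at h
            have h1 : ∀ i ∈ Finset.univ, 1 ≤ d i := fun i _ =>
              Nat.one_le_iff_ne_zero.mpr (h i)
            have hsum : (∑ i, d i) ≤ n := by
              have := MvPolynomial.le_totalDegree hd
              calc (∑ i, d i) = d.sum fun _ e => e := by
                    rw [Finsupp.sum_fintype]; intro i; rfl
                _ ≤ f.totalDegree := this
                _ ≤ n := hdeg
            have hsum' : (∑ i : Fin n, 1) ≤ ∑ i, d i := Finset.sum_le_sum h1
            have heq : (∑ i : Fin n, 1) = ∑ i, d i := le_antisymm hsum' (by simpa using hsum)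
            have hall := (Finset.sum_eq_sum_iff_of_le h1).mp heq
            exact hne (Finsupp.ext fun i => ((hall i (Finset.mem_univ i)).symm).trans (hmi i).symm)
          obtain ⟨i, hi⟩ := hzero
          rw [Finset.prod_eq_zero (Finset.mem_univ i) (by simp [hi]), mul_zero]
        · intro hnm
          rw [MvPolynomial.notMem_support_iff.mp hnm, zero_mul]
end

section
/- (Alon, first form) Let F be a field, A₁,…,Aₙ ⊆ F finite nonempty subsets, and f a polynomial over F in n variables with total degree less than |A₁|+⋯+|Aₙ|−n. Define P(α) = ∏_{i=1}^n ∏_{b∈A_i, b≠α_i}(α_i − b) for α ∈ A₁×⋯×Aₙ. Then ∑_{α ∈ A₁×⋯×Aₙ} f(α)/P(α) = 0. -/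
open Polynomial Finset

lemma leadingCoeff_lagrange_basis (s : Finset F) [Field F] [DecidableEq F] {a : F} (ha : a ∈ s) :
    (Lagrange.basis s id a).coeff (s.card - 1) = (∏ b ∈ s.erase a, (a - b))⁻¹ := by
  have hinj : Set.InjOn (id : F → F) s := fun x _ y _ h => h
  have hnd : (Lagrange.basis s id a).natDegree = s.card - 1 :=
    Lagrange.natDegree_basis hinj ha
  rw [← hnd, ← Polynomial.leadingCoeff]
  unfold Lagrange.basis
  rw [Polynomial.leadingCoeff_prod]
  rw [← Finset.prod_inv_distrib]
  apply Finset.prod_congr rfl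
  intro b hb
  have hab : (a : F) ≠ b := (Finset.ne_of_mem_erase hb).symm
  unfold Lagrange.basisDivisor
  rw [Polynomial.leadingCoeff_mul, Polynomial.leadingCoeff_C,
    (Polynomial.monic_X_sub_C _).leadingCoeff, mul_one]
  simp

lemma key_one_var (F : Type*) [Field F] [DecidableEq F] (s : Finset F) (k : ℕ)
    (hk : k + 1 < s.card) :
    ∑ a ∈ s, a ^ k * (∏ b ∈ s.erase a, (a - b))⁻¹ = 0 := by
  have hinj : Set.InjOn (id : F → F) s := fun x _ y _ h => h
  have hP : (X ^ k : F[X]) = Lagrange.interpolate s id (fun a => a ^ k) := by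
    apply Lagrange.eq_interpolate_of_eval_eq _ hinj
    · rw [Polynomial.degree_X_pow]
      exact_mod_cast Nat.lt_of_succ_lt hk
    · intro i _; simp
  have h0 : (X ^ k : F[X]).coeff (s.card - 1) = 0 := by
    rw [Polynomial.coeff_X_pow, if_neg (by omega)]
  rw [hP, Lagrange.interpolate_apply, Polynomial.finset_sum_coeff] at h0
  rw [← h0]
  apply Finset.sum_congr rfl
  intro a ha
  rw [Polynomial.coeff_C_mul, leadingCoeff_lagrange_basis s ha]

theorem stmt_14 (F : Type*) [Field F] [DecidableEq F] (n : ℕ) (A : Fin n → Finset F)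
    (hA : ∀ i, (A i).Nonempty) (f : MvPolynomial (Fin n) F)
    (hdeg : f.totalDegree + n < ∑ i, (A i).card) :
    ∑ α ∈ Fintype.piFinset A,
      MvPolynomial.eval α f / ∏ i, ∏ b ∈ (A i).erase (α i), (α i - b) = 0 := by
  have step : ∀ α ∈ Fintype.piFinset A,
      MvPolynomial.eval α f / ∏ i, ∏ b ∈ (A i).erase (α i), (α i - b)
        = ∑ d ∈ f.support, MvPolynomial.coeff d f *
            ∏ i, (α i ^ d i * (∏ b ∈ (A i).erase (α i), (α i - b))⁻¹) := by
    intro α _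
    rw [MvPolynomial.eval_eq', div_eq_mul_inv, Finset.sum_mul]
    apply Finset.sum_congr rfl
    intro d _
    rw [mul_assoc, ← Finset.prod_inv_distrib, ← Finset.prod_mul_distrib]
  rw [Finset.sum_congr rfl step, Finset.sum_comm]
  apply Finset.sum_eq_zero
  intro d hd
  have hsd : ∑ i, d i ≤ f.totalDegree := by
    have h := MvPolynomial.le_totalDegree hd
    rwa [Finsupp.sum_fintype _ _ (fun _ => rfl)] at h
  have hex : ∃ i, d i + 1 < (A i).card := by
    by_contra h
    push_neg at h
    have : ∑ i, (A i).card ≤ ∑ i, (d i + 1) := Finset.sum_le_sum fun i _ => h i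
    rw [Finset.sum_add_distrib, Finset.sum_const, Finset.card_univ, Fintype.card_fin,
      smul_eq_mul, mul_one] at this
    omega
  obtain ⟨i, hi⟩ := hex
  rw [← Finset.mul_sum]
  have hps := Finset.prod_univ_sum (t := A)
    (f := fun i a => a ^ d i * (∏ b ∈ (A i).erase a, (a - b))⁻¹)
  rw [← hps, Finset.prod_eq_zero (Finset.mem_univ i) (key_one_var F (A i) (d i) hi), mul_zero]
end

section
/- (Alon's Combinatorial Nullstellensatz, qualitative form) Let F be a field, A₁,…,Aₙ ⊆ F finite nonempty subsets, and f a polynomial over F in n variables with total degree less than |A₁|+⋯+|Aₙ|−n. If f is nonzero at some point of A₁×⋯×Aₙ, then f is nonzero at at least two distinct points of A₁×⋯×Aₙ. -/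
open Polynomial Finset

lemma coeff_lagrange_basis (F : Type*) [Field F] [DecidableEq F] (A : Finset F) (a : F)
    (ha : a ∈ A) :
    (Lagrange.basis A id a).coeff (A.card - 1) = ∏ b ∈ A.erase a, (a - b)⁻¹ := by
  have hinj : Set.InjOn (id : F → F) A := Set.injOn_id _
  have hnd := Lagrange.natDegree_basis hinj ha
  rw [← hnd, ← Polynomial.leadingCoeff, Lagrange.basis, Polynomial.leadingCoeff_prod]
  refine Finset.prod_congr rfl fun b hb => ?_
  have hab : (a : F) ≠ b := (Finset.mem_erase.mp hb).1.symm
  simp only [id] at *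
  rw [Lagrange.basisDivisor, Polynomial.leadingCoeff_mul, Polynomial.leadingCoeff_C,
    Polynomial.leadingCoeff_X_sub_C, mul_one]

lemma single_var_sum (F : Type*) [Field F] [DecidableEq F] (A : Finset F) (d : ℕ)
    (hd : d + 1 < A.card) :
    ∑ a ∈ A, a ^ d * ∏ b ∈ A.erase a, (a - b)⁻¹ = 0 := by
  have hinj : Set.InjOn (id : F → F) A := Set.injOn_id _
  have hdeg : ((X : F[X]) ^ d).degree < A.card := by
    refine lt_of_le_of_lt (Polynomial.degree_X_pow_le d) ?_
    exact_mod_cast Nat.lt_of_succ_lt hd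
  have h := Lagrange.eq_interpolate hinj hdeg
  have h2 := congrArg (fun p => Polynomial.coeff p (A.card - 1)) h
  simp only [Lagrange.interpolate_apply, Polynomial.finset_sum_coeff,
    Polynomial.coeff_C_mul, Polynomial.coeff_X_pow] at h2
  have hne : ¬ (A.card - 1 = d) := by omega
  rw [if_neg hne] at h2
  calc ∑ a ∈ A, a ^ d * ∏ b ∈ A.erase a, (a - b)⁻¹
      = ∑ x ∈ A, Polynomial.eval (id x) (X ^ d) * (Lagrange.basis A id x).coeff (A.card - 1) := by
        refine Finset.sum_congr rfl fun a ha => ?_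
        simp only [Polynomial.eval_pow, Polynomial.eval_X, id]
        rw [coeff_lagrange_basis F A a ha]
    _ = 0 := h2.symm

lemma grid_sum (F : Type*) [Field F] [DecidableEq F] (n : ℕ) (A : Fin n → Finset F)
    (f : MvPolynomial (Fin n) F) (hdeg : f.totalDegree + n < ∑ i, (A i).card) :
    ∑ α ∈ Fintype.piFinset A,
      MvPolynomial.eval α f * ∏ i, ∏ b ∈ (A i).erase (α i), (α i - b)⁻¹ = 0 := by
  have key : ∀ α ∈ Fintype.piFinset A,
      MvPolynomial.eval α f * ∏ i, ∏ b ∈ (A i).erase (α i), (α i - b)⁻¹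
      = ∑ d ∈ f.support, MvPolynomial.coeff d f *
          ∏ i, ((α i) ^ (d i) * ∏ b ∈ (A i).erase (α i), (α i - b)⁻¹) := by
    intro α _
    rw [MvPolynomial.eval_eq', Finset.sum_mul]
    refine Finset.sum_congr rfl fun d _ => ?_
    rw [Finset.prod_mul_distrib, mul_assoc]
  rw [Finset.sum_congr rfl key, Finset.sum_comm]
  refine Finset.sum_eq_zero fun d hd => ?_
  rw [← Finset.mul_sum,
    ← Finset.prod_univ_sum A (fun i a => a ^ d i * ∏ b ∈ (A i).erase a, (a - b)⁻¹)]
  have hex : ∃ i, d i + 1 < (A i).card := by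
    by_contra hc
    push_neg at hc
    have h1 : ∑ i, (A i).card ≤ ∑ i, (d i + 1) := Finset.sum_le_sum fun i _ => hc i
    have h2 : (∑ i, d i) ≤ f.totalDegree := by
      have := MvPolynomial.le_totalDegree hd
      rwa [Finsupp.sum_fintype _ _ (fun _ => rfl)] at this
    rw [Finset.sum_add_distrib, Finset.sum_const, Finset.card_univ, Fintype.card_fin,
      smul_eq_mul, mul_one] at h1
    omega
  obtain ⟨i, hi⟩ := hex
  rw [Finset.prod_eq_zero (Finset.mem_univ i) (single_var_sum F (A i) (d i) hi), mul_zero]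

theorem stmt_15 (F : Type*) [Field F] (n : ℕ) (A : Fin n → Finset F)
    (hA : ∀ i, (A i).Nonempty) (f : MvPolynomial (Fin n) F)
    (hdeg : f.totalDegree + n < ∑ i, (A i).card)
    (hne : ∃ α : Fin n → F, (∀ i, α i ∈ A i) ∧ MvPolynomial.eval α f ≠ 0) :
    ∃ α β : Fin n → F, α ≠ β ∧
      (∀ i, α i ∈ A i) ∧ (∀ i, β i ∈ A i) ∧
      MvPolynomial.eval α f ≠ 0 ∧ MvPolynomial.eval β f ≠ 0 := by
  classical
  obtain ⟨α, hαmem, hαne⟩ := hne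
  by_contra hcon
  push_neg at hcon
  -- every other grid point is a zero of f
  have hzero : ∀ β ∈ Fintype.piFinset A, β ≠ α → MvPolynomial.eval β f = 0 := by
    intro β hβ hβα
    by_contra hβne
    have hβmem : ∀ i, β i ∈ A i := fun i => Fintype.mem_piFinset.mp hβ i
    exact hβne (hcon α β (Ne.symm hβα) hαmem hβmem hαne)
  have hS := grid_sum F n A f hdeg
  have hαgrid : α ∈ Fintype.piFinset A := Fintype.mem_piFinset.mpr hαmem
  rw [Finset.sum_eq_single_of_mem α hαgrid
    (fun β hβ hβα => by rw [hzero β hβ hβα, zero_mul])] at hS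
  have hW : (∏ i, ∏ b ∈ (A i).erase (α i), (α i - b)⁻¹) ≠ 0 := by
    refine Finset.prod_ne_zero_iff.mpr fun i _ => ?_
    refine Finset.prod_ne_zero_iff.mpr fun b hb => ?_
    have : α i ≠ b := (Finset.mem_erase.mp hb).1.symm
    exact inv_ne_zero (sub_ne_zero_of_ne this)
  exact (mul_ne_zero hαne hW) hS
end

section
/- (Alon, coefficient formula) Let F be a field, A₁,…,Aₙ ⊆ F finite nonempty subsets, and f a polynomial over F in n variables with total degree at most |A₁|+⋯+|Aₙ|−n. Define P(α) = ∏_{i=1}^n ∏_{b∈A_i, b≠α_i}(α_i − b). Then the coefficient of x₁^{|A₁|−1}⋯xₙ^{|Aₙ|−1} in f equals ∑_{α ∈ A₁×⋯×Aₙ} f(α)/P(α). -/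
open Polynomial in
lemma key_single {F : Type*} [Field F] [DecidableEq F] (A : Finset F) (hA : A.Nonempty)
    (d : ℕ) (hd : d ≤ A.card - 1) :
    ∑ a ∈ A, a ^ d / ∏ b ∈ A.erase a, (a - b) =
      if d = A.card - 1 then 1 else 0 := by
  have hinj : Set.InjOn (id : F → F) A := Function.injective_id.injOn
  have hcard : 1 ≤ A.card := hA.card_pos
  have hdeg : ((X : F[X]) ^ d).degree < A.card := by
    refine lt_of_le_of_lt (degree_pow_le_of_le d degree_X_le) ?_
    simp only [mul_one]
    exact_mod_cast Nat.lt_of_le_of_lt hd (Nat.sub_lt hcard one_pos)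
  have hinterp := Lagrange.eq_interpolate (f := (X : F[X]) ^ d) hinj hdeg
  have hbasis : ∀ a ∈ A, (Lagrange.basis A id a).coeff (A.card - 1)
      = (∏ b ∈ A.erase a, (a - b))⁻¹ := by
    intro a ha
    have hnd : (Lagrange.basis A id a).natDegree = A.card - 1 :=
      Lagrange.natDegree_basis hinj ha
    rw [← hnd, ← Polynomial.leadingCoeff]
    unfold Lagrange.basis
    rw [Polynomial.leadingCoeff_prod, ← Finset.prod_inv_distrib]
    refine Finset.prod_congr rfl fun b hb => ?_
    have hab : a ≠ b := (Finset.ne_of_mem_erase hb).symm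
    simp only [id]
    rw [Lagrange.basisDivisor, Polynomial.leadingCoeff_mul, Polynomial.leadingCoeff_C,
      (Polynomial.monic_X_sub_C b).leadingCoeff, mul_one]
  calc ∑ a ∈ A, a ^ d / ∏ b ∈ A.erase a, (a - b)
      = (Lagrange.interpolate A id fun a => eval (id a) ((X : F[X]) ^ d)).coeff (A.card - 1) := by
        rw [Lagrange.interpolate_apply, Polynomial.finset_sum_coeff]
        refine Finset.sum_congr rfl fun a ha => ?_
        rw [Polynomial.coeff_C_mul, hbasis a ha]
        simp [div_eq_mul_inv]
    _ = ((X : F[X]) ^ d).coeff (A.card - 1) := by rw [← hinterp]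
    _ = if d = A.card - 1 then 1 else 0 := by rw [Polynomial.coeff_X_pow]; simp [eq_comm]

theorem stmt_16 (F : Type*) [Field F] [DecidableEq F] (n : ℕ) (A : Fin n → Finset F)
    (hA : ∀ i, (A i).Nonempty) (f : MvPolynomial (Fin n) F)
    (hdeg : f.totalDegree + n ≤ ∑ i, (A i).card) :
    f.coeff (Finsupp.equivFunOnFinite.symm fun i : Fin n => (A i).card - 1) =
      ∑ α ∈ Fintype.piFinset A,
        MvPolynomial.eval α f / ∏ i, ∏ b ∈ (A i).erase (α i), (α i - b) := by
  classical
  set t : Fin n →₀ ℕ := Finsupp.equivFunOnFinite.symm fun i : Fin n => (A i).card - 1 with ht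
  have htapp : ∀ i, t i = (A i).card - 1 := fun i => rfl
  -- sum of (card - 1) + n = sum of card
  have hsumcard : ∑ i, ((A i).card - 1) + n = ∑ i, (A i).card := by
    have h1 : ∑ i : Fin n, (A i).card = ∑ i : Fin n, (((A i).card - 1) + 1) :=
      Finset.sum_congr rfl fun i _ => (Nat.sub_add_cancel (hA i).card_pos).symm
    rw [h1, Finset.sum_add_distrib]
    simp
  have htd : f.totalDegree ≤ ∑ i, ((A i).card - 1) := by omega
  -- degree bound for each d in support
  have hdsum : ∀ d ∈ f.support, ∑ i, d i ≤ ∑ i, ((A i).card - 1) := by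
    intro d hd
    have h1 : (d.sum fun _ e => e) ≤ f.totalDegree := MvPolynomial.le_totalDegree hd
    have h2 : (d.sum fun _ e => e) = ∑ i, d i := Finsupp.sum_fintype _ _ (fun _ => rfl)
    omega
  calc f.coeff t
      = ∑ d ∈ f.support, f.coeff d *
          ∏ i, ∑ a ∈ A i, a ^ d i * (∏ b ∈ (A i).erase a, (a - b))⁻¹ := by
        have hkey : ∀ d ∈ f.support,
            (∏ i, ∑ a ∈ A i, a ^ d i * (∏ b ∈ (A i).erase a, (a - b))⁻¹)
              = if d = t then 1 else 0 := by
          intro d hd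
          by_cases hdt : d = t
          · subst hdt
            rw [if_pos rfl]
            refine Finset.prod_eq_one fun i _ => ?_
            have := key_single (A i) (hA i) (t i) (le_of_eq (htapp i))
            simp only [div_eq_mul_inv] at this
            rw [this, if_pos (htapp i)]
          · rw [if_neg hdt]
            have hj : ∃ j, d j < (A j).card - 1 := by
              by_contra h
              push_neg at h
              have hle : ∀ i ∈ Finset.univ, (A i).card - 1 ≤ d i := fun i _ => h i
              have heq : ∑ i, ((A i).card - 1) = ∑ i, d i :=
                le_antisymm (Finset.sum_le_sum hle) (hdsum d hd)
              have := (Finset.sum_eq_sum_iff_of_le hle).mp heq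
              exact hdt (Finsupp.ext fun i => ((this i (Finset.mem_univ i)).symm))
            obtain ⟨j, hj⟩ := hj
            refine Finset.prod_eq_zero (Finset.mem_univ j) ?_
            have := key_single (A j) (hA j) (d j) hj.le
            simp only [div_eq_mul_inv] at this
            rw [this, if_neg hj.ne]
        rw [Finset.sum_congr rfl fun d hd => by rw [hkey d hd]]
        simp only [mul_ite, mul_one, mul_zero, Finset.sum_ite_eq' f.support t f.coeff]
        by_cases h : t ∈ f.support
        · rw [if_pos h]
        · rw [if_neg h, MvPolynomial.notMem_support_iff.mp h]
    _ = ∑ d ∈ f.support, ∑ α ∈ Fintype.piFinset A,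
          f.coeff d * ∏ i, ((α i) ^ d i * (∏ b ∈ (A i).erase (α i), (α i - b))⁻¹) := by
        refine Finset.sum_congr rfl fun d _ => ?_
        rw [Finset.prod_univ_sum, Finset.mul_sum]
    _ = ∑ α ∈ Fintype.piFinset A,
          MvPolynomial.eval α f / ∏ i, ∏ b ∈ (A i).erase (α i), (α i - b) := by
        rw [Finset.sum_comm]
        refine Finset.sum_congr rfl fun α _ => ?_
        rw [MvPolynomial.eval_eq', div_eq_mul_inv, Finset.sum_mul]
        refine Finset.sum_congr rfl fun d _ => ?_
        rw [mul_assoc, ← Finset.prod_inv_distrib, ← Finset.prod_mul_distrib]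
end

section
/- (Erdős–Heilbronn conjecture, proved by Dias da Silva–Hamidoune) Let p be prime and A ⊆ ℤ/p nonempty. Let A ∔ A = {a + b : a, b ∈ A, a ≠ b}. Then |A ∔ A| ≥ min(2|A| − 3, p). -/
open Finset Polynomial

/-- Lagrange interpolation: weighted power sums pick out the top coefficient. -/
lemma EH_L1 {F : Type*} [Field F] [DecidableEq F] (S : Finset F) (i : ℕ) (hi : i < S.card) :
    ∑ s ∈ S, s ^ i * (∏ t ∈ S.erase s, (s - t))⁻¹ =
      if i = S.card - 1 then 1 else 0 := by
  have hinj : Set.InjOn (id : F → F) S := fun a _ b _ h => h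
  have hX : (X ^ i : F[X]) = Lagrange.interpolate S id (fun s => s ^ i) := by
    apply Lagrange.eq_interpolate_of_eval_eq _ hinj
    · rw [degree_X_pow]
      exact_mod_cast hi
    · intro j _; simp
  have hco := congrArg (fun q : F[X] => q.coeff (S.card - 1)) hX
  simp only [coeff_X_pow, Lagrange.interpolate_apply, finset_sum_coeff, coeff_C_mul] at hco
  have hbasis : ∀ s ∈ S, (Lagrange.basis S id s).coeff (S.card - 1)
      = (∏ t ∈ S.erase s, (s - t))⁻¹ := by
    intro s hs
    rw [Lagrange.basis_eq_prod_sub_inv_mul_nodal_div hs,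
      ← Lagrange.nodal_erase_eq_nodal_div hs, coeff_C_mul]
    have hm : (Lagrange.nodal (S.erase s) (id : F → F)).Monic := Lagrange.nodal_monic
    have hd : (Lagrange.nodal (S.erase s) (id : F → F)).natDegree = S.card - 1 := by
      rw [Lagrange.natDegree_nodal, card_erase_of_mem hs]
    rw [← hd, hm.coeff_natDegree, mul_one, Lagrange.nodalWeight, ← prod_inv_distrib]
    simp
  calc ∑ s ∈ S, s ^ i * (∏ t ∈ S.erase s, (s - t))⁻¹
      = ∑ s ∈ S, s ^ i * (Lagrange.basis S id s).coeff (S.card - 1) :=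
        sum_congr rfl fun s hs => by rw [hbasis s hs]
    _ = if i = S.card - 1 then 1 else 0 := by
        rw [← hco]
        simp [eq_comm]

lemma EH_L2 {F : Type*} [Field F] [DecidableEq F] (S T : Finset F) (a b i j : ℕ)
    (hS : S.card = a + 2) (hT : T.card = b + 1) (hij : i + j ≤ a + b + 1) :
    (∑ s ∈ S, s ^ i * (∏ u ∈ S.erase s, (s - u))⁻¹) *
      (∑ t ∈ T, t ^ j * (∏ u ∈ T.erase t, (t - u))⁻¹) =
      if i = a + 1 ∧ j = b then 1 else 0 := by
  by_cases hia : i ≤ a + 1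
  · by_cases hjb : j ≤ b
    · rw [EH_L1 S i (by omega), EH_L1 T j (by omega), hS, hT]
      by_cases h1 : i = a + 1 <;> by_cases h2 : j = b <;>
        simp [h1, h2] <;> omega
    · have hia' : i ≤ a := by omega
      rw [EH_L1 S i (by omega), hS]
      have : ¬ (i = a + 2 - 1) := by omega
      rw [if_neg this, zero_mul, if_neg (by omega)]
  · rw [EH_L1 T j (by omega), hT]
    have : ¬ (j = b + 1 - 1) := by omega
    rw [if_neg this, mul_zero, if_neg (by omega)]

lemma EH_sum_swap4 {β : Type*} [AddCommMonoid β] {α : Type*} (S T : Finset α)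
    (N : Finset ℕ) (I : ℕ → Finset ℕ) (f : α → α → ℕ → ℕ → β) :
    ∑ s ∈ S, ∑ t ∈ T, ∑ n ∈ N, ∑ i ∈ I n, f s t n i
      = ∑ n ∈ N, ∑ i ∈ I n, ∑ s ∈ S, ∑ t ∈ T, f s t n i :=
  calc ∑ s ∈ S, ∑ t ∈ T, ∑ n ∈ N, ∑ i ∈ I n, f s t n i
      = ∑ s ∈ S, ∑ n ∈ N, ∑ t ∈ T, ∑ i ∈ I n, f s t n i :=
        sum_congr rfl fun _ _ => Finset.sum_comm
    _ = ∑ n ∈ N, ∑ s ∈ S, ∑ t ∈ T, ∑ i ∈ I n, f s t n i := Finset.sum_comm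
    _ = ∑ n ∈ N, ∑ s ∈ S, ∑ i ∈ I n, ∑ t ∈ T, f s t n i :=
        sum_congr rfl fun _ _ => sum_congr rfl fun _ _ => Finset.sum_comm
    _ = ∑ n ∈ N, ∑ i ∈ I n, ∑ s ∈ S, ∑ t ∈ T, f s t n i :=
        sum_congr rfl fun _ _ => Finset.sum_comm

/-- Coefficient-extraction form of the Combinatorial Nullstellensatz, for the
polynomial `(x - y) * ∏ (x + y - c)` vanishing on a grid `S × T`. -/
lemma EH_L3 {F : Type*} [Field F] [DecidableEq F] (a b : ℕ) (S T C : Finset F)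
    (hS : S.card = a + 2) (hT : T.card = b + 1) (hC : C.card = a + b)
    (hv : ∀ s ∈ S, ∀ t ∈ T, (s - t) * ∏ c ∈ C, (s + t - c) = 0) :
    ((a + b).choose a : F) = ((a + b).choose (a + 1) : F) := by
  set m := a + b with hm
  set wS : F → F := fun s => (∏ u ∈ S.erase s, (s - u))⁻¹ with hwS
  set wT : F → F := fun t => (∏ u ∈ T.erase t, (t - u))⁻¹ with hwT
  set P : F[X] := Lagrange.nodal C (id : F → F) with hP
  have hPm : P.natDegree = m := by rw [hP, Lagrange.natDegree_nodal, hC]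
  have hmonic : P.Monic := Lagrange.nodal_monic
  have key : ∀ s t : F, (s - t) * ∏ c ∈ C, (s + t - c)
      = ∑ n ∈ range (m + 1), ∑ i ∈ range (n + 1),
          P.coeff n * (n.choose i : F) * (s ^ (i+1) * t ^ (n-i) - s ^ i * t ^ (n-i+1)) := by
    intro s t
    have h1 : ∏ c ∈ C, (s + t - c) = P.eval (s + t) := by
      rw [hP, Lagrange.eval_nodal]; simp
    rw [h1, eval_eq_sum_range' (by omega : P.natDegree < m + 1), mul_sum]
    refine sum_congr rfl fun n _ => ?_
    rw [add_pow, mul_sum, mul_sum]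
    refine sum_congr rfl fun i _ => ?_
    ring
  have hzero : ∑ s ∈ S, ∑ t ∈ T, ((s - t) * ∏ c ∈ C, (s + t - c)) * (wS s * wT t) = 0 :=
    sum_eq_zero fun s hs => sum_eq_zero fun t ht => by rw [hv s hs t ht, zero_mul]
  set G : ℕ → ℕ → F := fun i j =>
    (∑ s ∈ S, s ^ i * wS s) * (∑ t ∈ T, t ^ j * wT t) with hG
  have hGval : ∀ i j : ℕ, i + j ≤ a + b + 1 → G i j = if i = a + 1 ∧ j = b then 1 else 0 :=
    fun i j hij => EH_L2 S T a b i j hS hT hij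
  have hswap : ∑ s ∈ S, ∑ t ∈ T, ((s - t) * ∏ c ∈ C, (s + t - c)) * (wS s * wT t)
      = ∑ n ∈ range (m + 1), ∑ i ∈ range (n + 1),
          P.coeff n * (n.choose i : F) * (G (i+1) (n-i) - G i (n-i+1)) := by
    have step1 : ∑ s ∈ S, ∑ t ∈ T, ((s - t) * ∏ c ∈ C, (s + t - c)) * (wS s * wT t)
        = ∑ s ∈ S, ∑ t ∈ T, ∑ n ∈ range (m + 1), ∑ i ∈ range (n + 1),
            P.coeff n * (n.choose i : F) *
              ((s ^ (i+1) * t ^ (n-i) - s ^ i * t ^ (n-i+1)) * (wS s * wT t)) := by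
      refine sum_congr rfl fun s _ => sum_congr rfl fun t _ => ?_
      rw [key s t, sum_mul]
      refine sum_congr rfl fun n _ => ?_
      rw [sum_mul]
      exact sum_congr rfl fun i _ => by ring
    rw [step1, EH_sum_swap4]
    refine sum_congr rfl fun n _ => sum_congr rfl fun i _ => ?_
    rw [hG]
    simp only []
    rw [sum_mul_sum, sum_mul_sum, ← sum_sub_distrib]
    rw [mul_sum]
    refine sum_congr rfl fun s _ => ?_
    rw [← sum_sub_distrib, mul_sum]
    exact sum_congr rfl fun t _ => by ring
  have heval : ∑ n ∈ range (m + 1), ∑ i ∈ range (n + 1),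
      P.coeff n * (n.choose i : F) * (G (i+1) (n-i) - G i (n-i+1))
      = (m.choose a : F) - (m.choose (a+1) : F) := by
    have hterm : ∀ n ∈ range (m + 1), ∀ i ∈ range (n + 1),
        P.coeff n * (n.choose i : F) * (G (i+1) (n-i) - G i (n-i+1))
        = (if n = m ∧ i = a then P.coeff n * (n.choose i : F) else 0)
          - (if n = m ∧ i = a + 1 then P.coeff n * (n.choose i : F) else 0) := by
      intro n hn i hi
      rw [mem_range] at hn hi
      rw [hGval (i+1) (n-i) (by omega), hGval i (n-i+1) (by omega)]
      have e1 : (i + 1 = a + 1 ∧ n - i = b) ↔ (n = m ∧ i = a) := by omega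
      have e2 : (i = a + 1 ∧ n - i + 1 = b) ↔ (n = m ∧ i = a + 1) := by omega
      rw [if_congr e1 rfl rfl, if_congr e2 rfl rfl]
      split_ifs with h1 h2 h2
      · omega
      · ring
      · ring
      · ring
    rw [sum_congr rfl fun n hn => sum_congr rfl fun i hi => hterm n hn i hi]
    have hsplit : ∀ (i₀ : ℕ),
        ∑ n ∈ range (m + 1), ∑ i ∈ range (n + 1),
          (if n = m ∧ i = i₀ then P.coeff n * (n.choose i : F) else 0)
        = (m.choose i₀ : F) := by
      intro i₀
      rw [Finset.sum_eq_single m]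
      · simp only [true_and]
        rw [Finset.sum_ite_eq' (range (m+1)) i₀
          (fun i => P.coeff m * (m.choose i : F))]
        have hc : P.coeff m = 1 := by rw [← hPm]; exact hmonic.coeff_natDegree
        by_cases h : i₀ ∈ range (m + 1)
        · rw [if_pos h, hc, one_mul]
        · rw [if_neg h]
          rw [mem_range] at h
          rw [Nat.choose_eq_zero_of_lt (by omega), Nat.cast_zero]
      · intro n _ hn
        exact sum_eq_zero fun i _ => by simp [hn]
      · intro h; exact absurd (self_mem_range_succ m) h
    simp only [sum_sub_distrib]
    rw [hsplit a, hsplit (a+1)]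
  rw [hswap, heval] at hzero
  exact sub_eq_zero.mp hzero

/-- The Erdős–Heilbronn bound, natural-number version, in the range `2|A| - 3 ≤ p`. -/
lemma EH_main (p : ℕ) (hp : p.Prime) (A : Finset (ZMod p)) (h2 : 2 ≤ A.card)
    (hkp : 2 * A.card ≤ p + 3) :
    2 * A.card - 3 ≤
      (((A ×ˢ A).filter fun ab => ab.1 ≠ ab.2).image fun ab => ab.1 + ab.2).card := by
  haveI : Fact p.Prime := ⟨hp⟩
  have hppos : 0 < p := hp.pos
  set k := A.card with hk
  set R := ((A ×ˢ A).filter fun ab => ab.1 ≠ ab.2).image fun ab => ab.1 + ab.2 with hRdef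
  by_contra hlt
  push_neg at hlt
  have hRcard : R.card ≤ 2 * k - 4 := by omega
  have hcardZ : Fintype.card (ZMod p) = p := ZMod.card p
  obtain ⟨C, hRC, hCcard⟩ := Finset.exists_subsuperset_card_eq (Finset.subset_univ R)
    hRcard (by rw [Finset.card_univ, hcardZ]; omega)
  obtain ⟨x, hx⟩ : A.Nonempty := Finset.card_pos.mp (by omega)
  set B := A.erase x with hB
  have hBcard : B.card = k - 1 := Finset.card_erase_of_mem hx
  have hvan : ∀ s ∈ A, ∀ t ∈ B, (s - t) * ∏ c ∈ C, (s + t - c) = 0 := by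
    intro s hs t ht
    rcases eq_or_ne s t with rfl | hne
    · rw [sub_self, zero_mul]
    · have hmem : s + t ∈ R := Finset.mem_image.mpr
        ⟨(s, t), Finset.mem_filter.mpr
          ⟨Finset.mem_product.mpr ⟨hs, Finset.mem_of_mem_erase ht⟩, hne⟩, rfl⟩
      rw [Finset.prod_eq_zero (hRC hmem) (by rw [sub_self]), mul_zero]
  have hiff := EH_L3 (k - 2) (k - 2) A B C (by omega) (by omega) (by omega) hvan
  -- Catalan-number contradiction
  set r := k - 2 with hr
  have h2r : 2 * r < p := by omega
  have hrr : r + r = 2 * r := by omega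
  rw [hrr] at hiff
  have hchoose : (2*r).choose (r+1) * (r+1) = (2*r).choose r * r := by
    have h := Nat.choose_succ_right_eq (2*r) r
    have : 2*r - r = r := by omega
    rw [this] at h
    exact h
  have hcast : ((2*r).choose (r+1) : ZMod p) * ((r:ZMod p)+1) = ((2*r).choose r : ZMod p) * r := by
    exact_mod_cast congrArg (Nat.cast : ℕ → ZMod p) hchoose
  rw [← hiff] at hcast
  have hCa : ((2*r).choose r : ZMod p) = 0 := by
    linear_combination hcast
  have hdvd : p ∣ (2*r).choose r := by
    haveI : NeZero p := ⟨hppos.ne'⟩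
    exact (ZMod.natCast_eq_zero_iff _ p).mp hCa
  have hdvdfac : p ∣ Nat.factorial (2*r) :=
    hdvd.trans ⟨Nat.factorial r * Nat.factorial (2*r - r), by
      rw [← Nat.choose_mul_factorial_mul_factorial (by omega : r ≤ 2*r), mul_assoc]⟩
  have := (Nat.Prime.dvd_factorial hp).mp hdvdfac
  omega

theorem stmt_18 (p : ℕ) (hp : p.Prime) (A : Finset (ZMod p)) (hA : A.Nonempty) :
    min (2 * (A.card : ℤ) - 3) (p : ℤ) ≤
      ((((A ×ˢ A).filter fun ab => ab.1 ≠ ab.2).image fun ab => ab.1 + ab.2).card : ℤ) := by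
  haveI : Fact p.Prime := ⟨hp⟩
  have hk1 : 1 ≤ A.card := Finset.card_pos.mpr hA
  by_cases hcase : 2 * A.card ≤ p + 3
  · rcases Nat.lt_or_ge A.card 2 with h1 | h2
    · refine le_trans (min_le_left _ _) ?_
      have h0 : (0:ℤ) ≤ ((((A ×ˢ A).filter fun ab => ab.1 ≠ ab.2).image
          fun ab => ab.1 + ab.2).card : ℤ) := Int.natCast_nonneg _
      omega
    · refine le_trans (min_le_left _ _) ?_
      have := EH_main p hp A h2 hcase
      omega
  · refine le_trans (min_le_right _ _) ?_
    push_neg at hcase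
    have hkp : A.card ≤ p := by
      have := Finset.card_le_univ A
      rwa [ZMod.card p] at this
    have hodd : p % 2 = 1 := by
      rcases hp.eq_two_or_odd with h | h
      · omega
      · exact h
    set k' := (p + 3) / 2 with hk'
    have hk2 : 2 * k' = p + 3 := by omega
    have hk'le : k' ≤ A.card := by omega
    obtain ⟨A', hA'sub, hA'card⟩ := Finset.exists_subset_card_eq hk'le
    have hb := EH_main p hp A' (by omega) (by omega)
    have hsub : ((A' ×ˢ A').filter fun ab => ab.1 ≠ ab.2).image (fun ab => ab.1 + ab.2)
        ⊆ ((A ×ˢ A).filter fun ab => ab.1 ≠ ab.2).image fun ab => ab.1 + ab.2 :=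
      Finset.image_subset_image (Finset.filter_subset_filter _
        (Finset.product_subset_product hA'sub hA'sub))
    have hcard := Finset.card_le_card hsub
    rw [hA'card] at hb
    omega
end

section
/- Find the coefficient of the monomial x₁^{k−1} x₂^{k−1} ⋯ x_k^{k−1} in the polynomial ∏_{1≤i<j≤k} (x_j − x_i)²: it equals k! · (−1)^{k(k−1)/2}. -/
open Finset Equiv MvPolynomial

namespace Stmt19

/-- extension of a permutation of `Fin n` to `Fin (n+1)` fixing the last element -/
def ext1 (n : ℕ) (σ : Equiv.Perm (Fin n)) : Equiv.Perm (Fin (n + 1)) :=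
  (finSuccEquivLast.symm).permCongr σ.optionCongr

lemma ext1_castSucc (n : ℕ) (σ : Equiv.Perm (Fin n)) (i : Fin n) :
    ext1 n σ i.castSucc = (σ i).castSucc := by
  simp [ext1, Equiv.permCongr_apply]

lemma ext1_last (n : ℕ) (σ : Equiv.Perm (Fin n)) :
    ext1 n σ (Fin.last n) = Fin.last n := by
  simp [ext1, Equiv.permCongr_apply]

lemma sign_ext1 (n : ℕ) (σ : Equiv.Perm (Fin n)) :
    Equiv.Perm.sign (ext1 n σ) = Equiv.Perm.sign σ := by
  rw [ext1, Equiv.Perm.sign_permCongr, Equiv.optionCongr_sign]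

lemma rev_succ (n : ℕ) :
    (Fin.revPerm : Equiv.Perm (Fin (n + 1))) =
      (Fin.last n).cycleRange * ext1 n Fin.revPerm := by
  ext i
  induction i using Fin.lastCases with
  | last =>
    simp [Equiv.Perm.mul_apply, ext1_last, Fin.cycleRange_self, Fin.rev_last]
  | cast j =>
    rw [Equiv.Perm.mul_apply, Fin.revPerm_apply, ext1_castSucc, Fin.revPerm_apply,
      Fin.cycleRange_of_lt (Fin.castSucc_lt_last _)]
    have hj := j.isLt
    rw [Fin.val_add_one_of_lt (Fin.castSucc_lt_last _), Fin.coe_castSucc, Fin.val_rev,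
      Fin.val_rev, Fin.coe_castSucc]
    omega

lemma sign_revPerm_eq (n : ℕ) :
    Equiv.Perm.sign (Fin.revPerm : Equiv.Perm (Fin n)) = (-1) ^ (n * (n - 1) / 2) := by
  induction n with
  | zero =>
    rw [Subsingleton.elim (Fin.revPerm : Equiv.Perm (Fin 0)) 1, map_one]
    norm_num
  | succ n ih =>
    rw [rev_succ, map_mul, Fin.sign_cycleRange, sign_ext1, ih, Fin.val_last, ← pow_add]
    congr 1
    cases n with
    | zero => norm_num
    | succ m =>
      have h : (m + 1 + 1) * (m + 1 + 1 - 1) = (m + 1) * m + 2 * (m + 1) := by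
        simp only [Nat.add_sub_cancel]; ring
      rw [h, Nat.add_mul_div_left _ _ (by norm_num : 0 < 2)]
      simp only [Nat.add_sub_cancel]
      omega

lemma prod_X_pow_univ {k : ℕ} (d : Fin k →₀ ℕ) :
    ∏ j : Fin k, (X j : MvPolynomial (Fin k) ℤ) ^ d j = monomial d 1 := by
  rw [← MvPolynomial.prod_X_pow_eq_monomial]
  exact (Finset.prod_subset (Finset.subset_univ _) (by
    intro x _ hx
    simp [Finsupp.notMem_support_iff.mp hx])).symm

/-- the exponent finsupp corresponding to a permutation -/
noncomputable def w {k : ℕ} (σ : Equiv.Perm (Fin k)) : Fin k →₀ ℕ :=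
  Finsupp.equivFunOnFinite.symm fun x => ((σ.symm x : Fin k) : ℕ)

lemma w_apply {k : ℕ} (σ : Equiv.Perm (Fin k)) (x : Fin k) :
    w σ x = ((σ.symm x : Fin k) : ℕ) := rfl

lemma perm_prod {k : ℕ} (σ : Equiv.Perm (Fin k)) :
    ∏ i : Fin k, (X (σ i) : MvPolynomial (Fin k) ℤ) ^ (i : ℕ) = monomial (w σ) 1 := by
  calc ∏ i : Fin k, (X (σ i) : MvPolynomial (Fin k) ℤ) ^ (i : ℕ)
      = ∏ i : Fin k, (X (σ i) : MvPolynomial (Fin k) ℤ) ^ ((σ.symm (σ i) : Fin k) : ℕ) := by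
        simp
    _ = ∏ j : Fin k, (X j : MvPolynomial (Fin k) ℤ) ^ ((σ.symm j : Fin k) : ℕ) :=
        Equiv.prod_comp σ (fun j => (X j : MvPolynomial (Fin k) ℤ) ^ ((σ.symm j : Fin k) : ℕ))
    _ = ∏ j : Fin k, (X j : MvPolynomial (Fin k) ℤ) ^ (w σ) j := by
        simp [w_apply]
    _ = monomial (w σ) 1 := prod_X_pow_univ _

lemma cond_iff {k : ℕ} (σ τ : Equiv.Perm (Fin k)) :
    w σ + w τ = Finsupp.equivFunOnFinite.symm (fun _ : Fin k => k - 1) ↔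
      τ = σ * Fin.revPerm := by
  constructor
  · intro h
    have h' : ∀ x : Fin k, ((σ.symm x : Fin k) : ℕ) + ((τ.symm x : Fin k) : ℕ) = k - 1 := by
      intro x
      have := DFunLike.congr_fun h x
      simpa [w_apply, Finsupp.add_apply] using this
    have hsymm : τ.symm = (σ * Fin.revPerm).symm := by
      ext x
      have hx := h' x
      have h1 := (σ.symm x).isLt
      simp only [Equiv.Perm.mul_def, Equiv.symm_trans_apply, Fin.revPerm_symm,
        Fin.revPerm_apply, Fin.val_rev]
      omega
    simpa using congrArg Equiv.symm hsymm
  · rintro rfl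
    ext x
    have h1 := (σ.symm x).isLt
    simp only [Finsupp.add_apply, w_apply, Equiv.Perm.mul_def, Equiv.symm_trans_apply,
      Fin.revPerm_symm, Fin.revPerm_apply, Fin.val_rev,
      Finsupp.coe_equivFunOnFinite_symm]
    omega

end Stmt19

open Stmt19 in
theorem stmt_19 (k : ℕ) :
    (∏ ij ∈ Finset.univ.filter (fun ij : Fin k × Fin k => ij.1 < ij.2),
        (MvPolynomial.X ij.2 - MvPolynomial.X ij.1 : MvPolynomial (Fin k) ℤ) ^ 2).coeff
      (Finsupp.equivFunOnFinite.symm fun _ : Fin k => k - 1) =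
      (k.factorial : ℤ) * (-1) ^ (k * (k - 1) / 2) := by
  classical
  have h0 : ∀ (f : Fin k × Fin k → MvPolynomial (Fin k) ℤ),
      ∏ ij ∈ Finset.univ.filter (fun ij : Fin k × Fin k => ij.1 < ij.2), f ij
        = ∏ i : Fin k, ∏ j ∈ Finset.Ioi i, f (i, j) := by
    intro f
    rw [Finset.prod_sigma']
    refine Finset.prod_nbij' (fun ij => ⟨ij.1, ij.2⟩) (fun x => (x.1, x.2))
      ?_ ?_ ?_ ?_ ?_ <;> simp
  have h1 : (∏ ij ∈ Finset.univ.filter (fun ij : Fin k × Fin k => ij.1 < ij.2),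
        (MvPolynomial.X ij.2 - MvPolynomial.X ij.1 : MvPolynomial (Fin k) ℤ) ^ 2)
      = (Matrix.det (Matrix.vandermonde fun i => (MvPolynomial.X i : MvPolynomial (Fin k) ℤ))) ^ 2 := by
    rw [Matrix.det_vandermonde, h0, ← Finset.prod_pow]
    refine Finset.prod_congr rfl fun i _ => ?_
    rw [← Finset.prod_pow]
  have hdet : Matrix.det (Matrix.vandermonde fun i => (MvPolynomial.X i : MvPolynomial (Fin k) ℤ))
      = ∑ σ : Equiv.Perm (Fin k), monomial (w σ) ((Equiv.Perm.sign σ : ℤˣ) : ℤ) := by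
    rw [Matrix.det_apply]
    refine Finset.sum_congr rfl fun σ _ => ?_
    simp only [Matrix.vandermonde_apply]
    rw [perm_prod, Units.smul_def, MvPolynomial.smul_monomial, smul_eq_mul, mul_one]
  rw [h1, hdet, sq, Finset.sum_mul_sum]
  simp only [MvPolynomial.monomial_mul, MvPolynomial.coeff_sum, MvPolynomial.coeff_monomial]
  have h2 : ∀ σ : Equiv.Perm (Fin k),
      (∑ τ : Equiv.Perm (Fin k),
        if w σ + w τ = Finsupp.equivFunOnFinite.symm (fun _ : Fin k => k - 1) then
          ((Equiv.Perm.sign σ : ℤˣ) : ℤ) * ((Equiv.Perm.sign τ : ℤˣ) : ℤ) else 0)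
      = ((Equiv.Perm.sign (Fin.revPerm : Equiv.Perm (Fin k)) : ℤˣ) : ℤ) := by
    intro σ
    rw [Finset.sum_congr rfl fun τ _ => if_congr (cond_iff σ τ) rfl rfl,
      Finset.sum_ite_eq' Finset.univ (σ * Fin.revPerm)
        (fun τ => ((Equiv.Perm.sign σ : ℤˣ) : ℤ) * ((Equiv.Perm.sign τ : ℤˣ) : ℤ)),
      if_pos (Finset.mem_univ _), map_mul]
    have hs : ((Equiv.Perm.sign σ : ℤˣ) : ℤ) * ((Equiv.Perm.sign σ : ℤˣ) : ℤ) = 1 := by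
      rw [← Units.val_mul, Int.units_mul_self, Units.val_one]
    rw [Units.val_mul, ← mul_assoc, hs, one_mul]
  rw [Finset.sum_congr rfl fun σ _ => h2 σ, Finset.sum_const, Finset.card_univ,
    Fintype.card_perm, Fintype.card_fin, sign_revPerm_eq]
  push_cast
  ring
end
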